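/- Let Riem : Fin 4 → Fin 4 → Fin 4 → Fin 4 → ℝ (components R^k_{iξλ}, first two arguments Lorentz indices, last two space-time indices), let e : Matrix (Fin 4) (Fin 4) ℝ be invertible (the vierbein e_i^μ), and let H : Matrix (Fin 4) (Fin 4) ℝ (the frame metric η^{ij}, treated as an independent argument). With ε = (det e)⁻¹, define R̃(Riem, e, H) = ∑_{k,i,j,ξ,λ} Riem k i ξ λ · e k ξ · e j λ · H i j · ε. Then for all m, n ∈ Fin 4: −∑_{β} (∂R̃/∂e_{(n,β)}) · e m β + ∑_{k} (∂R̃/∂H_{(m,k)}) · H n k + ∑_{k} (∂R̃/∂H_{(k,m)}) · H k n + ∑_{k,β,λ} (∂R̃/∂Riem_{(m,k,β,λ)}) · Riem n k β λ − ∑_{k,β,λ} (∂R̃/∂Riem_{(k,n,β,λ)}) · Riem k m β λ = (if m = n then R̃(Riem, e, H) else 0), where the partial derivatives are Fréchet partial derivatives at (Riem, e, H). -/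

import Mathlib

/-!
`R̃` is a full contraction of the Lorentz indices of `R`, `e`, `e`, `η`, times `(det e)⁻¹`. Let
`E` act infinitesimally on every Lorentz index (tangent to `e ↦ (1 - t E) e`, contragrediently on
the indices contracted against those of `e`). The contraction is stationary along this generator,
while `det ((1 - t E) e) = det (1 - t E) det e` has derivative `-(tr E) det e`; hence the derivative
of `R̃` along the generator is `tr E • R̃`. For `E = single n m 1` the generator is the combination
of coordinate directions on the left of the identity, and `tr E = δ_mn`.
-/

attribute [local instance] Matrix.normedAddCommGroup Matrix.normedSpace

open Finset Matrix

section MatrixCalculus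

variable {𝕜 : Type*} [NontriviallyNormedField 𝕜] {m n p : Type*}

theorem Matrix.hasDerivAt_iff_apply [Fintype n] {A : 𝕜 → Matrix m n 𝕜} {A' : Matrix m n 𝕜}
    {t : 𝕜} :
    HasDerivAt A A' t ↔ ∀ i j, HasDerivAt (fun s => A s i j) (A' i j) t :=
  hasDerivAt_pi.trans (forall_congr' fun _ => hasDerivAt_pi)

theorem HasDerivAt.matrix_mul [Fintype m] [Fintype n] [Fintype p] {A : 𝕜 → Matrix m n 𝕜}
    {B : 𝕜 → Matrix n p 𝕜} {A' : Matrix m n 𝕜} {B' : Matrix n p 𝕜} {t : 𝕜} (hA : HasDerivAt A A' t)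
    (hB : HasDerivAt B B' t) : HasDerivAt (fun s => A s * B s) (A' * B t + A t * B') t := by
  rw [Matrix.hasDerivAt_iff_apply] at *
  intro i k
  simp only [Matrix.mul_apply, Matrix.add_apply, ← sum_add_distrib]
  exact HasDerivAt.fun_sum fun j _ => (hA i j).mul (hB j k)

theorem HasDerivAt.matrix_transpose [Fintype m] [Fintype n] {A : 𝕜 → Matrix m n 𝕜}
    {A' : Matrix m n 𝕜} {t : 𝕜} (hA : HasDerivAt A A' t) : HasDerivAt (fun s => (A s)ᵀ) A'ᵀ t := by
  rw [Matrix.hasDerivAt_iff_apply] at *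
  exact fun i j => hA j i

theorem hasDerivAt_add_smul {F : Type*} [NormedAddCommGroup F] [NormedSpace 𝕜 F] (a b : F)
    (t : 𝕜) : HasDerivAt (fun s : 𝕜 => a + s • b) b t := by
  simpa using ((hasDerivAt_id t).smul_const b).const_add a

variable [Fintype n] [DecidableEq n]

theorem Matrix.differentiable_det : Differentiable 𝕜 (fun A : Matrix n n 𝕜 => A.det) := by
  simp only [Matrix.det_apply]
  fun_prop

open Polynomial in
theorem Matrix.hasDerivAt_det_one_add_smul (M : Matrix n n 𝕜) :
    HasDerivAt (fun t : 𝕜 => (1 + t • M).det) M.trace 0 := by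
  have hpoly : (fun t : 𝕜 => (1 + t • M).det) =
      fun t => (det (1 + (X : 𝕜[X]) • M.map C)).eval t := by
    funext t
    rw [← coe_evalRingHom, RingHom.map_det]
    congr 1
    ext i j
    by_cases h : i = j <;> simp [h, mul_comm t]
  rw [hpoly, ← derivative_det_one_add_X_smul]
  exact Polynomial.hasDerivAt _ 0

theorem Matrix.trace_single {α : Type*} [AddCommMonoid α] (i j : n) (c : α) :
    (single i j c).trace = if i = j then c else 0 := by
  split_ifs with h
  · subst h
    exact trace_single_eq_same i c
  · exact trace_single_eq_of_ne i j c h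

end MatrixCalculus

namespace Vierbein

variable {ι : Type*}

/-- Configurations `(R^k_{iξλ}, e_k^ξ, η^{ij})`; the leading arguments of `R` and `e` are Lorentz
indices, the trailing ones space-time indices. -/
abbrev Fields (ι : Type*) := (ι → ι → ι → ι → ℝ) × Matrix ι ι ℝ × Matrix ι ι ℝ

def lorentzSlice (R : ι → ι → ι → ι → ℝ) (ξ l : ι) : Matrix ι ι ℝ :=
  Matrix.of fun k i => R k i ξ l

theorem lorentzSlice_add_smul (R V : ι → ι → ι → ι → ℝ) (t : ℝ) (ξ l : ι) :
    lorentzSlice (R + t • V) ξ l = lorentzSlice R ξ l + t • lorentzSlice V ξ l := by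
  ext
  simp [lorentzSlice]

variable [Fintype ι]

/-- The infinitesimal action of `E` on the Lorentz indices, tangent to `e ↦ (1 - t E) e`. -/
def lorentzGenerator (E : Matrix ι ι ℝ) (x : Fields ι) : Fields ι :=
  (fun a b c d => ∑ k, (E k a * x.1 k b c d - x.1 a k c d * E b k),
    -(E * x.2.1), Eᵀ * x.2.2 + x.2.2 * E)

theorem lorentzSlice_lorentzGenerator (E : Matrix ι ι ℝ) (x : Fields ι) (ξ l : ι) :
    lorentzSlice (lorentzGenerator E x).1 ξ l =
      Eᵀ * lorentzSlice x.1 ξ l - lorentzSlice x.1 ξ l * Eᵀ := by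
  ext
  simp [lorentzSlice, lorentzGenerator, Matrix.mul_apply]

theorem hasDerivAt_sliceContraction_zero (S H e E : Matrix ι ι ℝ) :
    HasDerivAt (fun t : ℝ => (e + t • -(E * e))ᵀ * ((S + t • (Eᵀ * S - S * Eᵀ)) *
      ((H + t • (Eᵀ * H + H * E)) * (e + t • -(E * e))))) 0 0 := by
  have hP := hasDerivAt_add_smul e (-(E * e)) (0 : ℝ)
  have h := hP.matrix_transpose.matrix_mul
    ((hasDerivAt_add_smul S (Eᵀ * S - S * Eᵀ) 0).matrix_mul
      ((hasDerivAt_add_smul H (Eᵀ * H + H * E) 0).matrix_mul hP))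
  convert h using 1
  simp only [zero_smul, add_zero, transpose_neg, transpose_mul, Matrix.mul_add, Matrix.add_mul,
    Matrix.mul_sub, Matrix.sub_mul, Matrix.mul_neg, Matrix.neg_mul, Matrix.mul_assoc]
  abel

variable [DecidableEq ι]

noncomputable def ehcDensity (x : Fields ι) : ℝ :=
  ∑ k, ∑ i, ∑ j, ∑ ξ, ∑ l, x.1 k i ξ l * x.2.1 k ξ * x.2.1 j l * x.2.2 i j * (x.2.1.det)⁻¹

theorem ehcDensity_eq_sliceContraction (R : ι → ι → ι → ι → ℝ) (e H : Matrix ι ι ℝ) :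
    ehcDensity (R, e, H) =
      (∑ ξ, ∑ l, (eᵀ * (lorentzSlice R ξ l * (H * e))) ξ l) * (e.det)⁻¹ := by
  calc ehcDensity (R, e, H)
      = ∑ p : ι × ι × ι, ∑ q : ι × ι,
          e p.1 q.1 * (R p.1 p.2.1 q.1 q.2 * (H p.2.1 p.2.2 * e p.2.2 q.2)) * (e.det)⁻¹ := by
        simp only [ehcDensity, Fintype.sum_prod_type]
        refine sum_congr rfl fun _ _ => sum_congr rfl fun _ _ => sum_congr rfl fun _ _ =>
          sum_congr rfl fun _ _ => sum_congr rfl fun _ _ => by ring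
    _ = _ := by
        rw [sum_comm]
        simp only [Fintype.sum_prod_type, Matrix.mul_apply, transpose_apply, lorentzSlice,
          of_apply, mul_sum, sum_mul]

theorem differentiableAt_ehcDensity (R : ι → ι → ι → ι → ℝ) {e : Matrix ι ι ℝ}
    (H : Matrix ι ι ℝ) (he : e.det ≠ 0) : DifferentiableAt ℝ ehcDensity (R, e, H) := by
  have hdet : DifferentiableAt ℝ (fun x : Fields ι => (x.2.1.det)⁻¹) (R, e, H) :=
    (Matrix.differentiable_det.comp (by fun_prop) _).inv he
  unfold ehcDensity
  fun_prop

theorem ehcDensity_add_smul_lorentzGenerator (E : Matrix ι ι ℝ) (R : ι → ι → ι → ι → ℝ)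
    (e H : Matrix ι ι ℝ) (t : ℝ) :
    ehcDensity ((R, e, H) + t • lorentzGenerator E (R, e, H)) =
      (∑ ξ, ∑ l, ((e + t • -(E * e))ᵀ * ((lorentzSlice R ξ l +
        t • (Eᵀ * lorentzSlice R ξ l - lorentzSlice R ξ l * Eᵀ)) *
        ((H + t • (Eᵀ * H + H * E)) * (e + t • -(E * e))))) ξ l) *
      ((1 + t • -E).det * e.det)⁻¹ := by
  have hline : (R, e, H) + t • lorentzGenerator E (R, e, H) =
      (R + t • (lorentzGenerator E (R, e, H)).1, e + t • -(E * e),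
        H + t • (Eᵀ * H + H * E)) := rfl
  have hdet : (1 + t • -E).det * e.det = (e + t • -(E * e)).det := by
    rw [← det_mul, Matrix.add_mul, Matrix.one_mul, smul_mul_assoc, Matrix.neg_mul]
  rw [hdet, hline, ehcDensity_eq_sliceContraction]
  simp only [lorentzSlice_add_smul, lorentzSlice_lorentzGenerator]

theorem hasLineDerivAt_ehcDensity_lorentzGenerator (E : Matrix ι ι ℝ) (R : ι → ι → ι → ι → ℝ)
    {e : Matrix ι ι ℝ} (H : Matrix ι ι ℝ) (he : e.det ≠ 0) :
    HasLineDerivAt ℝ ehcDensity (E.trace * ehcDensity (R, e, H)) (R, e, H)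
      (lorentzGenerator E (R, e, H)) := by
  have hcontraction : HasDerivAt (fun t : ℝ => ∑ ξ, ∑ l, ((e + t • -(E * e))ᵀ *
      ((lorentzSlice R ξ l + t • (Eᵀ * lorentzSlice R ξ l - lorentzSlice R ξ l * Eᵀ)) *
        ((H + t • (Eᵀ * H + H * E)) * (e + t • -(E * e))))) ξ l) 0 0 := by
    have h ξ l := Matrix.hasDerivAt_iff_apply.1
      (hasDerivAt_sliceContraction_zero (lorentzSlice R ξ l) H e E) ξ l
    simpa using HasDerivAt.fun_sum fun ξ _ => HasDerivAt.fun_sum fun l _ => h ξ l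
  have hdet : HasDerivAt (fun t : ℝ => (1 + t • -E).det * e.det) (-E.trace * e.det) 0 := by
    simpa using (Matrix.hasDerivAt_det_one_add_smul (-E)).mul_const e.det
  unfold HasLineDerivAt
  simp_rw [ehcDensity_add_smul_lorentzGenerator]
  refine (hcontraction.fun_mul (hdet.fun_inv (by simpa using he))).congr_deriv ?_
  rw [ehcDensity_eq_sliceContraction]
  simp only [smul_neg, zero_smul, neg_zero, add_zero, det_one, one_mul, zero_mul, smul_add,
    neg_mul, neg_neg, zero_add]
  field_simp

theorem lorentzGenerator_single (R : ι → ι → ι → ι → ℝ) (e H : Matrix ι ι ℝ) (m n : ι) :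
    lorentzGenerator (single n m 1) (R, e, H) =
      -(∑ β, e m β • ((0 : ι → ι → ι → ι → ℝ), single n β (1 : ℝ), (0 : Matrix ι ι ℝ)))
      + ∑ k, H n k • ((0 : ι → ι → ι → ι → ℝ), (0 : Matrix ι ι ℝ), single m k (1 : ℝ))
      + ∑ k, H k n • ((0 : ι → ι → ι → ι → ℝ), (0 : Matrix ι ι ℝ), single k m (1 : ℝ))
      + ∑ k, ∑ β, ∑ l, R n k β l •
          ((fun a b c d => if a = m ∧ b = k ∧ c = β ∧ d = l then (1 : ℝ) else 0),
            (0 : Matrix ι ι ℝ), (0 : Matrix ι ι ℝ))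
      - ∑ k, ∑ β, ∑ l, R k m β l •
          ((fun a b c d => if a = k ∧ b = n ∧ c = β ∧ d = l then (1 : ℝ) else 0),
            (0 : Matrix ι ι ℝ), (0 : Matrix ι ι ℝ)) := by
  refine Prod.ext ?_ (Prod.ext ?_ ?_)
  · funext a b c d
    simp [lorentzGenerator, single_apply, Prod.fst_sum, Finset.sum_apply, ite_and,
      sum_ite_irrel, eq_comm]
  · ext a b
    simp [lorentzGenerator, single_apply, Matrix.mul_apply, Prod.fst_sum, Prod.snd_sum,
      Matrix.sum_apply, ite_and, eq_comm]
  · ext a b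
    simp [lorentzGenerator, single_apply, Matrix.mul_apply, Prod.snd_sum, Matrix.sum_apply,
      ite_and, eq_comm]

end Vierbein

open Vierbein in
/-- Eq. (23), the tensor identity for the Lorentz (nonholonomic) index
class of the vierbein Einstein-Hilbert-Cartan density, with the space-time
(holonomic) indices fully contracted. -/
theorem vierbein_ehc_nonholonomic_identity
    (Riem : Fin 4 → Fin 4 → Fin 4 → Fin 4 → ℝ)
    (e : Matrix (Fin 4) (Fin 4) ℝ) (he : IsUnit e.det)
    (H : Matrix (Fin 4) (Fin 4) ℝ)
    (Rt : (Fin 4 → Fin 4 → Fin 4 → Fin 4 → ℝ) × Matrix (Fin 4) (Fin 4) ℝ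
            × Matrix (Fin 4) (Fin 4) ℝ → ℝ)
    (hRt : Rt = fun x =>
      ∑ k, ∑ i, ∑ j, ∑ ξ, ∑ l,
        x.1 k i ξ l * x.2.1 k ξ * x.2.1 j l * x.2.2 i j * (x.2.1.det)⁻¹) :
    ∀ m n : Fin 4,
      -(∑ β, fderiv ℝ Rt (Riem, e, H) (0, Matrix.single n β 1, 0) * e m β)
      + (∑ k, fderiv ℝ Rt (Riem, e, H) (0, 0, Matrix.single m k 1) * H n k)
      + (∑ k, fderiv ℝ Rt (Riem, e, H) (0, 0, Matrix.single k m 1) * H k n)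
      + (∑ k, ∑ β, ∑ l, fderiv ℝ Rt (Riem, e, H)
          ((fun a b c d => if a = m ∧ b = k ∧ c = β ∧ d = l then 1 else 0), 0, 0)
          * Riem n k β l)
      - (∑ k, ∑ β, ∑ l, fderiv ℝ Rt (Riem, e, H)
          ((fun a b c d => if a = k ∧ b = n ∧ c = β ∧ d = l then 1 else 0), 0, 0)
          * Riem k m β l)
      = if m = n then Rt (Riem, e, H) else 0 := by
  intro m n
  obtain rfl : Rt = ehcDensity := hRt
  have hline := hasLineDerivAt_ehcDensity_lorentzGenerator (single n m 1) Riem H he.ne_zero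
  calc _ = fderiv ℝ ehcDensity (Riem, e, H) (lorentzGenerator (single n m 1) (Riem, e, H)) := by
        rw [lorentzGenerator_single]
        simp only [map_add, map_sub, map_neg, map_sum, map_smul, smul_eq_mul, mul_comm]
    _ = (single n m 1).trace * ehcDensity (Riem, e, H) :=
        ((differentiableAt_ehcDensity Riem H he.ne_zero).hasFDerivAt.hasLineDerivAt _).unique hline
    _ = if m = n then ehcDensity (Riem, e, H) else 0 := by
        simp only [Matrix.trace_single, @eq_comm _ n m, ite_mul, one_mul, zero_mul]
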